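/- arXiv:2504.08084 — 7 statements merged into one kernel-verified Lean document; each statement's English description precedes it below -/
import Mathlib

section
/- Let G be a group, a, b ∈ G, and < a bi-ordering of G with 1 < a. Then 1 < (b⁻²ab²)(b⁻¹ab)⁻¹a and (b⁻²ab²)⁻¹(b⁻¹ab)a⁻¹ < 1. -/
theorem biordering_conj_ineq {G : Type*} [Group G] (r : G → G → Prop)
    (hsto : IsStrictTotalOrder G r)
    (hleft : ∀ a b c : G, r a b → r (c * a) (c * b))
    (hright : ∀ a b c : G, r a b → r (a * c) (b * c))
    (a b : G) (ha : r 1 a) :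
    r 1 ((b * b)⁻¹ * a * (b * b) * (b⁻¹ * a * b)⁻¹ * a) ∧
    r (((b * b)⁻¹ * a * (b * b))⁻¹ * (b⁻¹ * a * b) * a⁻¹) 1 := by
  have htrans : ∀ p q s : G, r p q → r q s → r p s := fun p q s h1 h2 =>
    hsto.trans p q s h1 h2
  -- conjugation preserves r
  have hconj : ∀ p q c : G, r p q → r (c⁻¹ * p * c) (c⁻¹ * q * c) := by
    intro p q c h
    exact hright _ _ c (hleft p q c⁻¹ h)
  have hinv : ∀ g : G, r 1 g → r g⁻¹ 1 := by
    intro g h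
    have := hleft 1 g g⁻¹ h
    simpa using this
  set x := b⁻¹ * a * b with hx
  set y := b⁻¹ * x * b with hy
  have hxy : (b * b)⁻¹ * a * (b * b) = y := by
    simp [hy, hx, mul_assoc]
  rw [hxy]
  have hy1 : r 1 y := by
    have h1 : r 1 x := by simpa [hx, mul_assoc] using hconj 1 a b ha
    simpa [hy, mul_assoc] using hconj 1 x b h1
  rcases (show r x a ∨ x = a ∨ r a x by
      by_cases h1 : r x a
      · exact Or.inl h1
      by_cases h2 : r a x
      · exact Or.inr (Or.inr h2)
      exact Or.inr (Or.inl (hsto.trichotomous x a h1 h2))) with hlt | heq | hgt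
  · -- x < a
    constructor
    · -- 1 < x⁻¹ a, 1 < y, so 1 < y * (x⁻¹ * a)
      have h1 : r 1 (x⁻¹ * a) := by simpa using hleft x a x⁻¹ hlt
      have h2 : r y (y * (x⁻¹ * a)) := by simpa using hleft _ _ y h1
      have := htrans _ _ _ hy1 h2
      simpa [mul_assoc] using this
    · have h1 : r (x * a⁻¹) 1 := by simpa using hright x a a⁻¹ hlt
      have h2 : r (y⁻¹ * (x * a⁻¹)) y⁻¹ := by simpa using hleft _ _ y⁻¹ h1
      have := htrans _ _ _ h2 (hinv y hy1)
      simpa [mul_assoc] using this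
  · constructor
    · have e : y * x⁻¹ * a = y := by rw [heq]; group
      rw [e]; exact hy1
    · have e : y⁻¹ * x * a⁻¹ = y⁻¹ := by rw [heq]; group
      rw [e]; exact hinv y hy1
  · -- a < x, so x < y by conjugation
    have hxyy : r x y := by simpa [hy, hx, mul_assoc] using hconj a x b hgt
    constructor
    · have h1 : r 1 (y * x⁻¹) := by simpa using hright x y x⁻¹ hxyy
      have h2 : r a (y * x⁻¹ * a) := by simpa using hright 1 (y * x⁻¹) a h1
      exact htrans _ _ _ ha h2
    · have h1 : r (y⁻¹ * x) 1 := by simpa using hleft x y y⁻¹ hxyy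
      have h2 : r (y⁻¹ * x * a⁻¹) a⁻¹ := by simpa using hright _ _ a⁻¹ h1
      have := htrans _ _ _ h2 (hinv a ha)
      simpa using this
end

section
/- The group G = ⟨a, b, d ∣ (b⁻²ab²)(b⁻¹ab)⁻¹a = (d⁻²ad²)⁻¹(d⁻¹ad)a⁻¹⟩ is not bi-orderable. -/
/-- A group is bi-orderable if it admits a strict total order invariant under
left and right multiplication. -/
def BiOrderable (G : Type*) [Group G] : Prop :=
  ∃ r : G → G → Prop, IsStrictTotalOrder G r ∧
    (∀ a b c : G, r a b → r (c * a) (c * b)) ∧ (∀ a b c : G, r a b → r (a * c) (b * c))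

/-- The relator `aᵇ²(aᵇ)⁻¹a · ((aᵈ²)⁻¹aᵈa⁻¹)⁻¹` in the free group on generators
`a = of 0`, `b = of 1`, `d = of 2`. -/
def relatorG : FreeGroup (Fin 3) :=
  let a := FreeGroup.of (0 : Fin 3)
  let b := FreeGroup.of (1 : Fin 3)
  let d := FreeGroup.of (2 : Fin 3)
  ((b * b)⁻¹ * a * (b * b) * (b⁻¹ * a * b)⁻¹ * a) *
    (((d * d)⁻¹ * a * (d * d))⁻¹ * (d⁻¹ * a * d) * a⁻¹)⁻¹

section helpers

variable {G : Type*} [Group G] {r : G → G → Prop}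

lemma bo_mul_pos [IsStrictTotalOrder G r]
    (hR : ∀ a b c : G, r a b → r (a * c) (b * c))
    {u v : G} (hu : r 1 u) (hv : r 1 v) : r 1 (u * v) :=
  _root_.trans_of r hv (by simpa using hR 1 u v hu)

lemma bo_conj_rel
    (hL : ∀ a b c : G, r a b → r (c * a) (c * b))
    (hR : ∀ a b c : G, r a b → r (a * c) (b * c))
    {x y : G} (g : G) (h : r x y) : r (g⁻¹ * x * g) (g⁻¹ * y * g) :=
  hR _ _ g (hL _ _ g⁻¹ h)

lemma bo_conj_pos
    (hL : ∀ a b c : G, r a b → r (c * a) (c * b))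
    (hR : ∀ a b c : G, r a b → r (a * c) (b * c))
    {x : G} (g : G) (hx : r 1 x) : r 1 (g⁻¹ * x * g) := by
  simpa using bo_conj_rel hL hR g hx

/-- Key lemma: in a bi-ordered group, if `x > 1` then `x^{g²} (x^g)⁻¹ x > 1`. -/
lemma bo_key [IsStrictTotalOrder G r]
    (hL : ∀ a b c : G, r a b → r (c * a) (c * b))
    (hR : ∀ a b c : G, r a b → r (a * c) (b * c))
    (x g : G) (hx : r 1 x) :
    r 1 ((g * g)⁻¹ * x * (g * g) * (g⁻¹ * x * g)⁻¹ * x) := by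
  rcases trichotomous_of r x (g⁻¹ * x * g) with h | h | h
  · -- x < x^g : then x^g < x^{g²}
    have h1 : r (g⁻¹ * x * g) (g⁻¹ * (g⁻¹ * x * g) * g) := bo_conj_rel hL hR g h
    have h2 : r 1 (g⁻¹ * (g⁻¹ * x * g) * g * (g⁻¹ * x * g)⁻¹) := by
      have := hR _ _ (g⁻¹ * x * g)⁻¹ h1
      rwa [mul_inv_cancel] at this
    have h3 := bo_mul_pos hR h2 hx
    have e : (g * g)⁻¹ * x * (g * g) * (g⁻¹ * x * g)⁻¹ * x
        = g⁻¹ * (g⁻¹ * x * g) * g * (g⁻¹ * x * g)⁻¹ * x := by group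
    rw [e]
    exact h3
  · -- x = x^g
    have e : (g * g)⁻¹ * x * (g * g) * (g⁻¹ * x * g)⁻¹ * x
        = (g⁻¹ * (g⁻¹ * x * g) * g) * ((g⁻¹ * x * g)⁻¹ * x) := by group
    rw [e, ← h]
    simpa using bo_conj_pos hL hR g hx
  · -- x^g < x
    have h1 : r 1 ((g⁻¹ * x * g)⁻¹ * x) := by
      have := hL _ _ (g⁻¹ * x * g)⁻¹ h
      rwa [inv_mul_cancel] at this
    have h2 : r 1 (g⁻¹ * (g⁻¹ * x * g) * g) :=
      bo_conj_pos hL hR g (bo_conj_pos hL hR g hx)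
    have h3 := bo_mul_pos hR h2 h1
    have e : (g * g)⁻¹ * x * (g * g) * (g⁻¹ * x * g)⁻¹ * x
        = (g⁻¹ * (g⁻¹ * x * g) * g) * ((g⁻¹ * x * g)⁻¹ * x) := by group
    rw [e]
    exact h3

/-- Dual key lemma: if `x < 1` then `x^{g²} (x^g)⁻¹ x < 1`. -/
lemma bo_key_neg [IsStrictTotalOrder G r]
    (hL : ∀ a b c : G, r a b → r (c * a) (c * b))
    (hR : ∀ a b c : G, r a b → r (a * c) (b * c))
    (x g : G) (hx : r x 1) :
    r ((g * g)⁻¹ * x * (g * g) * (g⁻¹ * x * g)⁻¹ * x) 1 := by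
  haveI : IsStrictTotalOrder G (Function.swap r) := IsStrictTotalOrder.swap r
  exact bo_key (r := Function.swap r)
    (fun a b c h => hL b a c h) (fun a b c h => hR b a c h) x g hx

end helpers

/-- The one-relator group of the problem. -/
abbrev Gp := PresentedGroup ({relatorG} : Set (FreeGroup (Fin 3)))

noncomputable def Agen : Gp := PresentedGroup.of 0
noncomputable def Bgen : Gp := PresentedGroup.of 1
noncomputable def Dgen : Gp := PresentedGroup.of 2

lemma relator_maps_to_one : PresentedGroup.mk {relatorG} relatorG = 1 :=
  (QuotientGroup.eq_one_iff _).2 (Subgroup.subset_normalClosure rfl)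

/-- The defining relation, in the presented group. -/
lemma the_relation : (Bgen*Bgen)⁻¹ * Agen * (Bgen*Bgen) * (Bgen⁻¹*Agen*Bgen)⁻¹ * Agen
    = ((Dgen*Dgen)⁻¹ * Agen * (Dgen*Dgen))⁻¹ * (Dgen⁻¹*Agen*Dgen) * Agen⁻¹ := by
  have hof : ∀ i : Fin 3, PresentedGroup.mk {relatorG} (FreeGroup.of i) = PresentedGroup.of i :=
    fun _ => rfl
  have h2 : (Bgen*Bgen)⁻¹ * Agen * (Bgen*Bgen) * (Bgen⁻¹*Agen*Bgen)⁻¹ * Agen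
      * (((Dgen*Dgen)⁻¹ * Agen * (Dgen*Dgen))⁻¹ * (Dgen⁻¹*Agen*Dgen) * Agen⁻¹)⁻¹ = 1 := by
    rw [← relator_maps_to_one]
    rfl
  exact mul_inv_eq_one.mp h2

/-- The map sending `a ↦ 1 ∈ ℤ/2`, `b, d ↦ 0`, which kills the relator. -/
noncomputable def fZ2 : Fin 3 → Multiplicative (ZMod 2) :=
  fun i => if i = 0 then Multiplicative.ofAdd 1 else 1

lemma fZ2_cond : ∀ r' ∈ ({relatorG} : Set (FreeGroup (Fin 3))), FreeGroup.lift fZ2 r' = 1 := by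
  intro r' hr'
  rw [Set.mem_singleton_iff] at hr'
  subst hr'
  simp [relatorG, map_mul, map_inv, fZ2]
  decide

lemma Agen_ne_one : Agen ≠ 1 := by
  intro h
  have := congrArg (PresentedGroup.toGroup fZ2_cond) h
  simp [Agen, PresentedGroup.toGroup.of, fZ2] at this

theorem oneRelatorGroup_not_biOrderable :
    ¬ BiOrderable (PresentedGroup ({relatorG} : Set (FreeGroup (Fin 3)))) := by
  rintro ⟨r, hto, hL, hR⟩
  haveI := hto
  rcases trichotomous_of r Agen 1 with h | h | h
  · -- Agen < 1 : LHS of the relation is < 1 while the RHS is > 1.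
    have h1 : r ((Bgen*Bgen)⁻¹ * Agen * (Bgen*Bgen) * (Bgen⁻¹*Agen*Bgen)⁻¹ * Agen) 1 :=
      bo_key_neg hL hR Agen Bgen h
    have hA' : r 1 Agen⁻¹ := by
      have := hL _ _ Agen⁻¹ h
      rwa [inv_mul_cancel, mul_one] at this
    have h2 : r 1 ((Dgen*Dgen)⁻¹ * Agen⁻¹ * (Dgen*Dgen) * (Dgen⁻¹*Agen⁻¹*Dgen)⁻¹ * Agen⁻¹) :=
      bo_key hL hR Agen⁻¹ Dgen hA'
    have e : (Dgen*Dgen)⁻¹ * Agen⁻¹ * (Dgen*Dgen) * (Dgen⁻¹*Agen⁻¹*Dgen)⁻¹ * Agen⁻¹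
        = ((Dgen*Dgen)⁻¹ * Agen * (Dgen*Dgen))⁻¹ * (Dgen⁻¹*Agen*Dgen) * Agen⁻¹ := by group
    rw [e, ← the_relation] at h2
    exact irrefl_of r 1 (trans_of r h2 h1)
  · exact Agen_ne_one h
  · -- Agen > 1 : LHS of the relation is > 1 while the RHS is < 1.
    have h1 : r 1 ((Bgen*Bgen)⁻¹ * Agen * (Bgen*Bgen) * (Bgen⁻¹*Agen*Bgen)⁻¹ * Agen) :=
      bo_key hL hR Agen Bgen h
    have hA' : r Agen⁻¹ 1 := by
      have := hL _ _ Agen⁻¹ h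
      rwa [mul_one, inv_mul_cancel] at this
    have h2 : r ((Dgen*Dgen)⁻¹ * Agen⁻¹ * (Dgen*Dgen) * (Dgen⁻¹*Agen⁻¹*Dgen)⁻¹ * Agen⁻¹) 1 :=
      bo_key_neg hL hR Agen⁻¹ Dgen hA'
    have e : (Dgen*Dgen)⁻¹ * Agen⁻¹ * (Dgen*Dgen) * (Dgen⁻¹*Agen⁻¹*Dgen)⁻¹ * Agen⁻¹
        = ((Dgen*Dgen)⁻¹ * Agen * (Dgen*Dgen))⁻¹ * (Dgen⁻¹*Agen*Dgen) * Agen⁻¹ := by group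
    rw [e, ← the_relation] at h2
    exact irrefl_of r 1 (trans_of r h1 h2)
end

section
/- In the Baumslag–Solitar group BS(m,m) = ⟨a, b ∣ b a^m b⁻¹ = a^m⟩ with m ≥ 2, the commutator [a,b] = a b a⁻¹ b⁻¹ is a generalized torsion element: it is nontrivial and some product of m conjugates of [a,b] equals the identity. -/
/-- The relator `b aᵐ b⁻¹ (aᵐ)⁻¹` of the Baumslag–Solitar group `BS(m,m)`, in the free
group on `a = of 0`, `b = of 1`. -/
def bsRelator (m : ℕ) : FreeGroup (Fin 2) :=
  let a := FreeGroup.of (0 : Fin 2)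
  let b := FreeGroup.of (1 : Fin 2)
  b * a ^ m * b⁻¹ * (a ^ m)⁻¹

/-- The Baumslag–Solitar group `BS(m,m) = ⟨a, b ∣ b aᵐ b⁻¹ = aᵐ⟩`. -/
abbrev BS (m : ℕ) : Type := PresentedGroup ({bsRelator m} : Set (FreeGroup (Fin 2)))

/-- The generator `a` of `BS(m,m)`. -/
def bsA (m : ℕ) : BS m := PresentedGroup.of 0

/-- The generator `b` of `BS(m,m)`. -/
def bsB (m : ℕ) : BS m := PresentedGroup.of 1

open scoped commutatorElement

/-! ### The Heisenberg group over `ZMod m`, used to detect nontriviality of `⁅a,b⁆`. -/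

/-- The Heisenberg group over `ZMod m`. -/
@[ext] structure Heis (m : ℕ) where
  x : ZMod m
  y : ZMod m
  z : ZMod m

namespace Heis

variable {m : ℕ}

instance : Mul (Heis m) := ⟨fun p q => ⟨p.x + q.x, p.y + q.y, p.z + q.z + p.x * q.y⟩⟩
@[simp] lemma mul_def (p q : Heis m) :
    p * q = ⟨p.x + q.x, p.y + q.y, p.z + q.z + p.x * q.y⟩ := rfl
instance : One (Heis m) := ⟨⟨0, 0, 0⟩⟩
@[simp] lemma one_def : (1 : Heis m) = ⟨0, 0, 0⟩ := rfl
instance : Inv (Heis m) := ⟨fun p => ⟨-p.x, -p.y, p.x * p.y - p.z⟩⟩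
@[simp] lemma inv_def (p : Heis m) : p⁻¹ = ⟨-p.x, -p.y, p.x * p.y - p.z⟩ := rfl

instance : Group (Heis m) where
  mul_assoc a b c := by ext <;> simp <;> ring
  one_mul a := by ext <;> simp
  mul_one a := by ext <;> simp
  inv_mul_cancel a := by ext <;> simp

lemma aPow (n : ℕ) : (⟨1, 0, 0⟩ : Heis m) ^ n = ⟨(n : ZMod m), 0, 0⟩ := by
  induction n with
  | zero => simp
  | succ n ih => rw [pow_succ, ih]; ext <;> push_cast <;> simp

end Heis

/-- The product of suitable conjugates of `⁅a,b⁆` equals `⁅aⁿ,b⁆`. -/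
lemma bs_key {G : Type*} [Group G] (a b : G) :
    ∀ n : ℕ,
      (List.ofFn fun i : Fin n =>
        a ^ ((n : ℤ) - 1 - i) * ⁅a, b⁆ * a ^ (-((n : ℤ) - 1 - i))).prod = ⁅a ^ (n : ℤ), b⁆ := by
  intro n
  induction n with
  | zero => simp
  | succ n ih =>
    rw [List.ofFn_succ]
    simp only [Fin.val_zero, Fin.val_succ]
    push_cast
    have h2 : (List.ofFn fun i : Fin n =>
        a ^ ((n : ℤ) + 1 - 1 - ((i : ℤ) + 1)) * ⁅a, b⁆ *
          a ^ (-((n : ℤ) + 1 - 1 - ((i : ℤ) + 1)))).prod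
        = ⁅a ^ (n : ℤ), b⁆ := by
      rw [← ih]
      refine congrArg List.prod (congrArg List.ofFn (funext fun i => ?_))
      congr 2 <;> ring
    rw [List.prod_cons, h2]
    have e : ((n : ℤ) + 1 - 1 - (0 : ℤ)) = (n : ℤ) := by ring
    rw [e]
    have : a ^ ((n : ℤ) + 1) = a ^ (n : ℤ) * a := by rw [zpow_add, zpow_one]
    rw [this]
    group

/-- The defining relation holds in `BS m`. -/
lemma bs_relation (m : ℕ) :
    bsB m * (bsA m) ^ m * (bsB m)⁻¹ * ((bsA m) ^ m)⁻¹ = 1 := by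
  have h : (QuotientGroup.mk' _ : FreeGroup (Fin 2) →* BS m) (bsRelator m) = 1 := by
    rw [QuotientGroup.mk'_apply]
    exact (QuotientGroup.eq_one_iff _).2
      (Subgroup.subset_normalClosure (by simp))
  have h' : PresentedGroup.mk ({bsRelator m} : Set (FreeGroup (Fin 2))) (bsRelator m) = 1 :=
    PresentedGroup.one_of_mem rfl
  simp only [bsRelator, map_mul, map_pow, map_inv] at h'
  exact h'

theorem bs_commutator_genTorsion (m : ℕ) (hm : 2 ≤ m) :
    ⁅bsA m, bsB m⁆ ≠ 1 ∧
      ∃ h : Fin m → BS m,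
        (List.ofFn fun i => (h i)⁻¹ * ⁅bsA m, bsB m⁆ * h i).prod = 1 := by
  constructor
  · -- nontriviality via the Heisenberg group
    haveI : Fact (1 < m) := ⟨by omega⟩
    set aH : Heis m := ⟨1, 0, 0⟩
    set bH : Heis m := ⟨0, 1, 0⟩
    have haPow : aH ^ m = 1 := by
      rw [Heis.aPow]; ext <;> simp [ZMod.natCast_self]
    have hrel : ∀ r ∈ ({bsRelator m} : Set (FreeGroup (Fin 2))),
        FreeGroup.lift ![aH, bH] r = 1 := by
      intro r hr
      rw [Set.mem_singleton_iff] at hr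
      subst hr
      simp [bsRelator, map_mul, map_pow, map_inv, haPow]
    intro hc
    have := congrArg (PresentedGroup.toGroup hrel) hc
    rw [map_commutatorElement, map_one] at this
    have hA : PresentedGroup.toGroup hrel (bsA m) = aH := by
      simp [bsA, PresentedGroup.toGroup.of]
    have hB : PresentedGroup.toGroup hrel (bsB m) = bH := by
      simp [bsB, PresentedGroup.toGroup.of]
    rw [hA, hB] at this
    have hcomm : ⁅aH, bH⁆ = (⟨0, 0, 1⟩ : Heis m) := by
      rw [commutatorElement_def]; ext <;> simp [aH, bH]
    rw [hcomm] at this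
    have : (1 : ZMod m) = 0 := congrArg Heis.z this
    exact one_ne_zero this
  · -- the product of conjugates is trivial
    refine ⟨fun i => (bsA m) ^ ((i : ℤ) + 1 - m), ?_⟩
    have heq : (List.ofFn fun i : Fin m =>
        ((bsA m) ^ ((i : ℤ) + 1 - m))⁻¹ * ⁅bsA m, bsB m⁆ * (bsA m) ^ ((i : ℤ) + 1 - m))
        = List.ofFn fun i : Fin m =>
          (bsA m) ^ ((m : ℤ) - 1 - i) * ⁅bsA m, bsB m⁆ * (bsA m) ^ (-((m : ℤ) - 1 - i)) := by
      refine congrArg List.ofFn (funext fun i => ?_)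
      rw [show ((i : ℤ) + 1 - m) = -((m : ℤ) - 1 - i) by ring, zpow_neg, inv_inv]
    rw [heq, bs_key, zpow_natCast]
    have h2 : bsB m * (bsA m) ^ m * (bsB m)⁻¹ = (bsA m) ^ m :=
      mul_inv_eq_one.mp (bs_relation m)
    have hcommute : Commute (bsB m) ((bsA m) ^ m) := by
      have h3 := congrArg (fun g => g * bsB m) h2
      show bsB m * bsA m ^ m = bsA m ^ m * bsB m
      simpa [mul_assoc] using h3
    exact (commutatorElement_eq_one_iff_commute).2 hcommute.symm
end

section
/- Let G be a group and H ⊆ G a subgroup such that H is not relatively torsion-free in G, i.e., there exist g ∈ G \ H, n ≥ 2, and c_1,...,c_n ∈ H with g c_1 g c_2 ⋯ g c_n = 1. Then in the amalgamated free product G₀ = G *_H G of two copies of G over H (with the identity identification of H), the element g' g⁻¹ (where g' denotes the copy of g in the second factor) is a nontrivial generalized torsion element. In particular, G *_H G is not generalized torsion-free. -/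
/-- `g` is a generalized torsion element: `g ≠ 1` and some nonempty finite product of
conjugates of `g` equals `1`. -/
def IsGenTorsion {G : Type*} [Group G] (g : G) : Prop :=
  g ≠ 1 ∧ ∃ l : List G, l ≠ [] ∧ (l.map fun h => h⁻¹ * g * h).prod = 1

/-- A group is generalized torsion-free if it has no generalized torsion elements. -/
def IsGTF (G : Type*) [Group G] : Prop := ∀ g : G, ¬ IsGenTorsion g

lemma conj_shift {M : Type*} [Group M] (t x : M) :
    ∀ l : List M, (l.map fun h => (h * x⁻¹)⁻¹ * t * (h * x⁻¹)).prod
      = x * (l.map fun h => h⁻¹ * t * h).prod * x⁻¹ := by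
  intro l
  induction l with
  | nil => simp
  | cons y l ihl =>
    simp only [List.map_cons, List.prod_cons, ihl]
    group

/-- Rewriting a product `t a₁ t a₂ ⋯ t aₙ` as a product of `n` conjugates of `t`
times `a₁ ⋯ aₙ`. -/
lemma conj_list_aux {M : Type*} [Group M] (t : M) :
    ∀ a : List M, ∃ l : List M, l.length = a.length ∧
      (l.map fun h => h⁻¹ * t * h).prod = (a.map fun x => t * x).prod * a.prod⁻¹ := by
  intro a
  induction a with
  | nil => exact ⟨[], rfl, by simp⟩
  | cons x a ih =>
    obtain ⟨l, hl, hprod⟩ := ih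
    refine ⟨1 :: l.map (· * x⁻¹), by simp [hl], ?_⟩
    simp only [List.map_cons, List.map_map, List.prod_cons, inv_one, one_mul, mul_one]
    have h2 : (l.map ((fun h => h⁻¹ * t * h) ∘ fun h => h * x⁻¹)).prod
        = x * (l.map fun h => h⁻¹ * t * h).prod * x⁻¹ := by
      rw [← conj_shift t x l, ← List.map_map]
      simp only [List.map_map, Function.comp_def]
    rw [h2, hprod]
    group

/-- If `H` is not relatively torsion-free in `G`, witnessed by `g ∉ H` and
`c₁, …, cₙ ∈ H` (`n ≥ 2`) with `g c₁ g c₂ ⋯ g cₙ = 1`, then in the amalgam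
`G *_H G` of two copies of `G` over `H` (indexed here by `Bool`, with `true` the
first copy and `false` the second copy) the element `g' g⁻¹` is a nontrivial
generalized torsion element; in particular `G *_H G` is not GTF. -/
theorem amalgam_double_not_GTF {G : Type*} [Group G] (H : Subgroup G)
    (g : G) (hg : g ∉ H) (n : ℕ) (hn : 2 ≤ n) (c : Fin n → G) (hc : ∀ i, c i ∈ H)
    (hprod : (List.ofFn fun i => g * c i).prod = 1) :
    IsGenTorsion
        (Monoid.PushoutI.of (φ := fun _ : Bool => H.subtype) false g *
          (Monoid.PushoutI.of (φ := fun _ : Bool => H.subtype) true g)⁻¹) ∧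
      ¬ IsGTF (Monoid.PushoutI (fun _ : Bool => H.subtype)) := by
  set φ : Bool → H →* G := fun _ : Bool => H.subtype with hφdef
  have hφinj : ∀ i : Bool, Function.Injective (φ i) := fun _ => H.subtype_injective
  set t : Monoid.PushoutI φ :=
    Monoid.PushoutI.of (φ := φ) false g * (Monoid.PushoutI.of (φ := φ) true g)⁻¹ with ht
  -- of false and of true agree on H
  have hH : ∀ x : G, x ∈ H → Monoid.PushoutI.of (φ := φ) false x
      = Monoid.PushoutI.of (φ := φ) true x := by
    intro x hx
    have h1 := Monoid.PushoutI.of_apply_eq_base φ false ⟨x, hx⟩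
    have h2 := Monoid.PushoutI.of_apply_eq_base φ true ⟨x, hx⟩
    have e1 : (φ false) ⟨x, hx⟩ = x := rfl
    have e2 : (φ true) ⟨x, hx⟩ = x := rfl
    rw [e1] at h1
    rw [e2] at h2
    rw [h1, h2]
  -- nontriviality
  have htne : t ≠ 1 := by
    intro h
    have heq : Monoid.PushoutI.of (φ := φ) false g = Monoid.PushoutI.of (φ := φ) true g :=
      mul_inv_eq_one.mp (ht ▸ h)
    have hmem : Monoid.PushoutI.of (φ := φ) true g ∈
        (Monoid.PushoutI.of (φ := φ) true).range ⊓ (Monoid.PushoutI.of (φ := φ) false).range :=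
      ⟨⟨g, rfl⟩, ⟨g, heq⟩⟩
    rw [Monoid.PushoutI.inf_of_range_eq_base_range hφinj
      (by decide : (true : Bool) ≠ false)] at hmem
    obtain ⟨h', hh'⟩ := hmem
    have hob := Monoid.PushoutI.of_apply_eq_base φ true h'
    have : (φ true) h' = g :=
      Monoid.PushoutI.of_injective hφinj true (by rw [hob, hh'])
    exact hg (this ▸ h'.2)
  -- the product of conjugates
  have key : ∃ l : List (Monoid.PushoutI φ), l ≠ [] ∧
      (l.map fun h => h⁻¹ * t * h).prod = 1 := by
    set a : List (Monoid.PushoutI φ) :=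
      List.ofFn (fun i => Monoid.PushoutI.of (φ := φ) true (g * c i)) with ha
    have ha' : a = (List.ofFn fun i => g * c i).map (Monoid.PushoutI.of (φ := φ) true) := by
      rw [List.map_ofFn]; rfl
    have haprod : a.prod = 1 := by
      rw [ha', List.prod_hom _ (Monoid.PushoutI.of (φ := φ) true), hprod, map_one]
    have hbprod : (a.map fun x => t * x).prod = 1 := by
      have hb : (a.map fun x => t * x) =
          (List.ofFn fun i => g * c i).map (Monoid.PushoutI.of (φ := φ) false) := by
        rw [ha', List.map_map, List.map_ofFn, List.map_ofFn]
        refine congrArg List.ofFn (funext fun i => ?_)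
        simp only [Function.comp_apply, map_mul, ht]
        rw [← hH (c i) (hc i)]
        group
      rw [hb, List.prod_hom _ (Monoid.PushoutI.of (φ := φ) false), hprod, map_one]
    obtain ⟨l, hlen, hl⟩ := conj_list_aux t a
    refine ⟨l, ?_, by rw [hl, haprod, hbprod]; simp⟩
    intro h
    rw [h] at hlen
    simp [ha] at hlen
    omega
  exact ⟨⟨htne, key⟩, fun hGTF => hGTF t ⟨htne, key⟩⟩
end

section
/- Let G = *_C G_i be an amalgamated free product, α, β ∈ G with K(α, β) = l(β), and let γ be a right factor of αβ. Then there exists a right factor α₂ of α such that γ = α₂β. -/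
section Amalgam

variable {ι : Type*} {G : ι → Type*} [∀ i, Group (G i)] {H : Type*} [Group H]

/-- A word in `Σ i, G i` is alternating: every letter lies outside the amalgamated
subgroup `C` (the image of `H`), and consecutive letters have different indices. -/
def IsAltWord (φ : ∀ i, H →* G i) (w : List (Σ i, G i)) : Prop :=
  (∀ p ∈ w, p.2 ∉ (φ p.1).range) ∧ w.Chain' (fun p q => p.1 ≠ q.1)

/-- The value of a word in the amalgam. -/
def wordProd (φ : ∀ i, H →* G i) (w : List (Σ i, G i)) : Monoid.PushoutI φ :=
  (w.map fun p => Monoid.PushoutI.of (φ := φ) p.1 p.2).prod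

/-- `g = c · g₁ ⋯ gₙ` with `c ∈ C` and `[g₁, …, gₙ]` alternating. -/
def RepresentsL (φ : ∀ i, H →* G i) (g : Monoid.PushoutI φ) (w : List (Σ i, G i)) : Prop :=
  IsAltWord φ w ∧ ∃ c : H, g = Monoid.PushoutI.base φ c * wordProd φ w

/-- `g = g₁ ⋯ gₙ · d` with `d ∈ C` and `[g₁, …, gₙ]` alternating. -/
def RepresentsR (φ : ∀ i, H →* G i) (g : Monoid.PushoutI φ) (w : List (Σ i, G i)) : Prop :=
  IsAltWord φ w ∧ ∃ d : H, g = wordProd φ w * Monoid.PushoutI.base φ d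

/-- The length `l(g)` of an element of the amalgam: the number of letters in an
alternating expression for `g`. -/
noncomputable def len (φ : ∀ i, H →* G i) (g : Monoid.PushoutI φ) : ℕ :=
  sInf {n | ∃ w, RepresentsL φ g w ∧ w.length = n}

/-- Membership in the amalgamated subgroup `C`. -/
def inBase (φ : ∀ i, H →* G i) (x : Monoid.PushoutI φ) : Prop :=
  x ∈ (Monoid.PushoutI.base φ).range

/-- The cancellation number `K(g,h)`: writing `g = c xₘ ⋯ x₁` (word `[xₘ, …, x₁]`)
and `h = y₁ ⋯ yₙ d`, it is the largest `k ≥ 0` with `xₖ ⋯ x₁ y₁ ⋯ yₖ ∈ C`. -/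
noncomputable def cancelNum (φ : ∀ i, H →* G i) (g h : Monoid.PushoutI φ) : ℕ :=
  sSup {k | ∃ wg wh, RepresentsL φ g wg ∧ RepresentsR φ h wh ∧
    k ≤ wg.length ∧ k ≤ wh.length ∧
    inBase φ (wordProd φ (wg.drop (wg.length - k) ++ wh.take k))}

/-- `γ` is a right factor of `g`: `g = g₁ γ` with `l(g) = l(g₁) + l(γ)`. -/
noncomputable def IsRightFactor (φ : ∀ i, H →* G i) (γ g : Monoid.PushoutI φ) : Prop :=
  ∃ g₁, g = g₁ * γ ∧ len φ g = len φ g₁ + len φ γ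

end Amalgam

section Aux

open Monoid.PushoutI List

variable {ι : Type*} {G : ι → Type*} [∀ i, Group (G i)] {H : Type*} [Group H]
variable {φ : ∀ i, H →* G i}

theorem wordProd_nil : wordProd φ ([] : List (Σ i, G i)) = 1 := rfl

theorem wordProd_cons (p : (Σ i, G i)) (w : List (Σ i, G i)) :
    wordProd φ (p :: w) = Monoid.PushoutI.of (φ := φ) p.1 p.2 * wordProd φ w := by
  simp [wordProd]

theorem wordProd_append (u v : List (Σ i, G i)) :
    wordProd φ (u ++ v) = wordProd φ u * wordProd φ v := by
  simp [wordProd]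

theorem wordProd_singleton (p : (Σ i, G i)) :
    wordProd φ [p] = Monoid.PushoutI.of (φ := φ) p.1 p.2 := by
  simp [wordProd]

theorem of_mul_base (i : ι) (x : G i) (h : H) :
    Monoid.PushoutI.of (φ := φ) i x * Monoid.PushoutI.base φ h
      = Monoid.PushoutI.of (φ := φ) i (x * φ i h) := by
  rw [← of_apply_eq_base (φ := φ) i h, ← map_mul]

theorem base_mul_of (i : ι) (x : G i) (h : H) :
    Monoid.PushoutI.base φ h * Monoid.PushoutI.of (φ := φ) i x
      = Monoid.PushoutI.of (φ := φ) i (φ i h * x) := by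
  rw [← of_apply_eq_base (φ := φ) i h, ← map_mul]

theorem isAltWord_append {u v : List (Σ i, G i)} :
    IsAltWord φ (u ++ v) ↔ IsAltWord φ u ∧ IsAltWord φ v ∧
      ∀ x ∈ u.getLast?, ∀ y ∈ v.head?, x.1 ≠ y.1 := by
  simp only [IsAltWord, List.Chain', List.isChain_append, List.mem_append]
  aesop

theorem isAltWord_nil : IsAltWord φ ([] : List (Σ i, G i)) := ⟨by simp, List.isChain_nil⟩

theorem isAltWord_singleton {p : (Σ i, G i)} (hp : p.2 ∉ (φ p.1).range) :
    IsAltWord φ [p] := ⟨by simpa using hp, List.isChain_singleton _⟩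

end Aux

section Aux2

open Monoid.PushoutI List

variable {ι : Type*} {G : ι → Type*} [∀ i, Group (G i)] {H : Type*} [Group H]
variable {φ : ∀ i, H →* G i}

/-- An alternating word as a `CoprodI.Word`. -/
def altToWord (w : List (Σ i, G i)) (hw : IsAltWord φ w) : Monoid.CoprodI.Word G :=
  { toList := w
    ne_one := fun l hl h1 => hw.1 l hl (h1 ▸ one_mem _)
    chain_ne := hw.2 }

theorem ofCoprodI_word_prod (w : Monoid.CoprodI.Word G) :
    Monoid.PushoutI.ofCoprodI (φ := φ) w.prod = wordProd φ w.toList := by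
  rw [Monoid.CoprodI.Word.prod, wordProd, map_list_prod, List.map_map]
  congr 1

theorem altToWord_reduced {w : List (Σ i, G i)} (hw : IsAltWord φ w) :
    Monoid.PushoutI.Reduced φ (altToWord w hw) := fun g hg => hw.1 g hg

/-- Uniqueness of the index sequence of an alternating representation. -/
theorem repL_map_fst_eq (hφ : ∀ i, Function.Injective (φ i)) {g : Monoid.PushoutI φ}
    {w w' : List (Σ i, G i)} (hw : RepresentsL φ g w) (hw' : RepresentsL φ g w') :
    w.map Sigma.fst = w'.map Sigma.fst := by
  classical
  obtain ⟨d⟩ := Monoid.PushoutI.NormalWord.transversal_nonempty φ hφ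
  obtain ⟨ha, c, hc⟩ := hw
  obtain ⟨ha', c', hc'⟩ := hw'
  obtain ⟨n, hn, hmap⟩ := (altToWord_reduced ha).exists_normalWord_prod_eq d
  obtain ⟨n', hn', hmap'⟩ := (altToWord_reduced ha').exists_normalWord_prod_eq d
  have h1 : (c • n).prod = g := by
    rw [Monoid.PushoutI.NormalWord.prod_base_smul, hn, ofCoprodI_word_prod, hc]; rfl
  have h2 : (c' • n').prod = g := by
    rw [Monoid.PushoutI.NormalWord.prod_base_smul, hn', ofCoprodI_word_prod, hc']; rfl
  have h3 : (c • n) = (c' • n') := Monoid.PushoutI.NormalWord.prod_injective (h1.trans h2.symm)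
  have h4 : n.toList = n'.toList := by
    rw [Monoid.PushoutI.NormalWord.base_smul_def', Monoid.PushoutI.NormalWord.base_smul_def']
      at h3
    exact congrArg (fun x => x.toList) h3
  have := hmap.symm.trans ((congrArg (List.map Sigma.fst) h4).trans hmap')
  exact this

theorem repL_len (hφ : ∀ i, Function.Injective (φ i)) {g : Monoid.PushoutI φ}
    {w : List (Σ i, G i)} (hw : RepresentsL φ g w) : len φ g = w.length := by
  refine le_antisymm (Nat.sInf_le ⟨w, hw, rfl⟩) (le_csInf ⟨w.length, w, hw, rfl⟩ ?_)
  rintro n ⟨w', hw', rfl⟩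
  have := repL_map_fst_eq hφ hw hw'
  have h2 : w.length = w'.length := by
    simpa using congrArg List.length this
  omega

/-- Existence of an alternating representation. -/
theorem exists_repL (hφ : ∀ i, Function.Injective (φ i)) (g : Monoid.PushoutI φ) :
    ∃ w, RepresentsL φ g w := by
  classical
  obtain ⟨d⟩ := Monoid.PushoutI.NormalWord.transversal_nonempty φ hφ
  let n : Monoid.PushoutI.NormalWord d := g • Monoid.PushoutI.NormalWord.empty
  have hn : n.prod = g := by
    rw [Monoid.PushoutI.NormalWord.prod_smul, Monoid.PushoutI.NormalWord.prod_empty, mul_one]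
  refine ⟨n.toList, ⟨?_, n.chain_ne⟩, n.head, ?_⟩
  · rintro ⟨i, x⟩ hx hr
    have hset : x ∈ d.set i := n.normalized i x hx
    have hone : x ≠ 1 := n.ne_one ⟨i, x⟩ hx
    have h1 := (d.compl i).existsUnique x
    obtain ⟨y, hy⟩ := h1
    have ea := hy.2 (⟨⟨x, hr⟩, ⟨1, d.one_mem i⟩⟩ : ((φ i).range : Set (G i)) × (d.set i))
      (by simp)
    have eb := hy.2 (⟨⟨1, one_mem _⟩, ⟨x, hset⟩⟩ : ((φ i).range : Set (G i)) × (d.set i))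
      (by simp)
    have e1 := ea.trans eb.symm
    exact hone (congrArg (fun z => (z.2 : G i)) e1).symm
  · rw [← hn, Monoid.PushoutI.NormalWord.prod, ofCoprodI_word_prod]

end Aux2

section Aux3

open Monoid.PushoutI List

variable {ι : Type*} {G : ι → Type*} [∀ i, Group (G i)] {H : Type*} [Group H]
variable {φ : ∀ i, H →* G i}

/-- The inverse word. -/
def invWord (w : List (Σ i, G i)) : List (Σ i, G i) :=
  (w.map fun p => ⟨p.1, p.2⁻¹⟩).reverse

theorem invWord_length (w : List (Σ i, G i)) : (invWord w).length = w.length := by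
  simp [invWord]

theorem wordProd_invWord (w : List (Σ i, G i)) :
    wordProd φ (invWord w) = (wordProd φ w)⁻¹ := by
  induction w with
  | nil => simp [invWord, wordProd_nil]
  | cons p ws ih =>
    have : invWord (p :: ws) = invWord ws ++ [⟨p.1, p.2⁻¹⟩] := by simp [invWord]
    rw [this, wordProd_append, ih, wordProd_singleton, wordProd_cons, mul_inv_rev, map_inv]

theorem isAltWord_invWord {w : List (Σ i, G i)} (hw : IsAltWord φ w) :
    IsAltWord φ (invWord w) := by
  obtain ⟨h1, h2⟩ := hw
  constructor
  · rintro ⟨i, x⟩ hx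
    simp only [invWord, List.mem_reverse, List.mem_map] at hx
    obtain ⟨⟨j, y⟩, hp, he⟩ := hx
    cases he
    intro hr
    exact h1 ⟨j, y⟩ hp (by simpa using inv_mem hr)
  · rw [invWord, List.Chain', List.isChain_reverse]
    refine (List.isChain_map _).2 ?_
    exact List.IsChain.imp (fun a b h => by exact fun hc => h hc.symm) h2

theorem repL_base_mul {g : Monoid.PushoutI φ} {w : List (Σ i, G i)} (h : H)
    (hw : RepresentsL φ g w) : RepresentsL φ (Monoid.PushoutI.base φ h * g) w := by
  obtain ⟨ha, c, hc⟩ := hw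
  exact ⟨ha, h * c, by rw [hc, map_mul, mul_assoc]⟩

theorem repL_mul_base {g : Monoid.PushoutI φ} {w : List (Σ i, G i)} (h : H)
    (hw : RepresentsL φ g w) :
    ∃ w', w'.length = w.length ∧ RepresentsL φ (g * Monoid.PushoutI.base φ h) w' := by
  obtain ⟨ha, c, hc⟩ := hw
  rcases List.eq_nil_or_concat w with rfl | ⟨us, p, rfl⟩
  · exact ⟨[], rfl, isAltWord_nil, c * h, by rw [hc]; simp [wordProd_nil, map_mul, mul_assoc]⟩
  · rw [List.concat_eq_append] at ha hc
    refine ⟨us ++ [⟨p.1, p.2 * φ p.1 h⟩], by simp, ?_, c, ?_⟩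
    · rw [isAltWord_append] at ha ⊢
      obtain ⟨hu, hp, hl⟩ := ha
      refine ⟨hu, isAltWord_singleton ?_, ?_⟩
      · intro hr
        exact hp.1 p (by simp) ((mul_mem_cancel_right (show φ p.1 h ∈ (φ p.1).range from ⟨h, rfl⟩)).1 hr)
      · simpa using hl
    · simp [hc, wordProd_append, wordProd_singleton, mul_assoc, of_mul_base]

theorem repL_toR {g : Monoid.PushoutI φ} {w : List (Σ i, G i)} (hw : RepresentsL φ g w) :
    ∃ w', w'.length = w.length ∧ RepresentsR φ g w' := by
  obtain ⟨ha, c, hc⟩ := hw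
  rcases w with _ | ⟨p, ws⟩
  · exact ⟨[], rfl, isAltWord_nil, c, by rw [hc]; simp [wordProd_nil]⟩
  · refine ⟨⟨p.1, φ p.1 c * p.2⟩ :: ws, by simp, ?_, 1, ?_⟩
    · obtain ⟨h1, h2⟩ := ha
      refine ⟨?_, ?_⟩
      · rintro q hq
        rcases List.mem_cons.1 hq with rfl | hq
        · exact fun hr => h1 p (by simp) ((mul_mem_cancel_left (show φ p.1 c ∈ (φ p.1).range from ⟨c, rfl⟩)).1 hr)
        · exact h1 q (List.mem_cons_of_mem _ hq)
      · rcases ws with _ | ⟨q, ws⟩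
        · exact List.isChain_singleton _
        · refine List.IsChain.cons_cons ?_ (h2.tail)
          have := List.isChain_cons_cons.1 h2
          exact this.1
    · rw [hc, wordProd_cons, wordProd_cons, ← mul_assoc, base_mul_of, map_one, mul_one]

theorem repR_toL {g : Monoid.PushoutI φ} {w : List (Σ i, G i)} (hw : RepresentsR φ g w) :
    ∃ w', w'.length = w.length ∧ RepresentsL φ g w' := by
  obtain ⟨ha, d, hd⟩ := hw
  have : RepresentsL φ (wordProd φ w) w := ⟨ha, 1, by simp⟩
  obtain ⟨w', hl, hw'⟩ := repL_mul_base d this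
  exact ⟨w', hl, by rw [hd]; exact hw'⟩

theorem repR_inv {g : Monoid.PushoutI φ} {w : List (Σ i, G i)} (hw : RepresentsR φ g w) :
    ∃ w', w'.length = w.length ∧ RepresentsL φ g⁻¹ w' := by
  obtain ⟨ha, d, hd⟩ := hw
  refine ⟨invWord w, invWord_length w, isAltWord_invWord ha, d⁻¹, ?_⟩
  rw [hd, mul_inv_rev, wordProd_invWord, map_inv]

end Aux3

section Aux4

open Monoid.PushoutI List

variable {ι : Type*} {G : ι → Type*} [∀ i, Group (G i)] {H : Type*} [Group H]
variable {φ : ∀ i, H →* G i}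

/-- Key reduction lemma: a product (alt word) · base · (alt word) can be rewritten as
base · (alt word) without increasing the total length. -/
theorem exists_alt_reduction (u : List (Σ i, G i)) :
    IsAltWord φ u → ∀ (c : H) (v : List (Σ i, G i)), IsAltWord φ v →
    ∃ (c' : H) (w : List (Σ i, G i)), IsAltWord φ w ∧ w.length ≤ u.length + v.length ∧
      wordProd φ u * Monoid.PushoutI.base φ c * wordProd φ v
        = Monoid.PushoutI.base φ c' * wordProd φ w := by
  induction u using List.reverseRecOn with
  | nil =>
    intro _ c v hv
    exact ⟨c, v, hv, by simp, by rw [wordProd_nil, one_mul]⟩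
  | append_singleton us p ih =>
    intro hu c v hv
    obtain ⟨i, x⟩ := p
    have hus : IsAltWord φ us := (isAltWord_append.1 hu).1
    have hx : x ∉ (φ i).range := by
      have := (isAltWord_append.1 hu).2.1
      exact fun hr => this.1 ⟨i, x⟩ (by simp) hr
    rcases v with _ | ⟨⟨j, y⟩, vs⟩
    · -- v empty : absorb c into the last letter of u
      refine ⟨1, us ++ [⟨i, x * φ i c⟩], ?_, by simp, ?_⟩
      · rw [isAltWord_append] at hu ⊢
        refine ⟨hus, isAltWord_singleton ?_, by simpa using hu.2.2⟩
        exact fun hr => hx ((mul_mem_cancel_right (show φ i c ∈ (φ i).range from ⟨c, rfl⟩)).1 hr)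
      · simp [wordProd_append, wordProd_singleton, wordProd_nil, mul_assoc, of_mul_base]
    · by_cases hij : i = j
      · subst hij
        have hvs : IsAltWord φ vs :=
          ⟨fun q hq => hv.1 q (List.mem_cons_of_mem _ hq), (List.isChain_cons.1 hv.2).2⟩
        by_cases hz : x * φ i c * y ∈ (φ i).range
        · obtain ⟨h, hh⟩ := hz
          obtain ⟨c', w, hw, hlen, hprod⟩ := ih hus h vs hvs
          refine ⟨c', w, hw, by simp; omega, ?_⟩
          have key : wordProd φ (us ++ [⟨i, x⟩]) * Monoid.PushoutI.base φ c
              * wordProd φ (⟨i, y⟩ :: vs)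
              = wordProd φ us * Monoid.PushoutI.base φ h * wordProd φ vs := by
            have hof : Monoid.PushoutI.of (φ := φ) i (φ i h)
                = Monoid.PushoutI.of (φ := φ) i x * Monoid.PushoutI.base φ c
                  * Monoid.PushoutI.of (φ := φ) i y := by
              rw [hh, map_mul, map_mul, of_apply_eq_base]
            rw [wordProd_append, wordProd_singleton, wordProd_cons,
              ← of_apply_eq_base (φ := φ) i h, hof]
            simp [mul_assoc]
          rw [key, hprod]
        · refine ⟨1, us ++ ⟨i, x * φ i c * y⟩ :: vs, ?_, by simp, ?_⟩
          · rw [isAltWord_append] at hu ⊢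
            have hcons : IsAltWord φ (⟨i, x * φ i c * y⟩ :: vs) := by
              refine ⟨?_, ?_⟩
              · rintro q hq
                rcases List.mem_cons.1 hq with rfl | hq
                · exact hz
                · exact hvs.1 q hq
              · exact List.isChain_cons.2 ⟨(List.isChain_cons.1 hv.2).1, hvs.2⟩
            exact ⟨hus, hcons, by simpa using hu.2.2⟩
          · rw [map_one, one_mul, wordProd_append, wordProd_append, wordProd_singleton,
              wordProd_cons, wordProd_cons]
            simp [mul_assoc, of_mul_base, base_mul_of, map_mul]
      · -- distinct indices: absorb c into last letter of u, concatenate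
        refine ⟨1, (us ++ [⟨i, x * φ i c⟩]) ++ ⟨j, y⟩ :: vs, ?_, by simp; omega, ?_⟩
        · rw [isAltWord_append]
          refine ⟨?_, hv, ?_⟩
          · rw [isAltWord_append] at hu ⊢
            refine ⟨hus, isAltWord_singleton ?_, by simpa using hu.2.2⟩
            exact fun hr => hx
              ((mul_mem_cancel_right (show φ i c ∈ (φ i).range from ⟨c, rfl⟩)).1 hr)
          · simpa using hij
        · rw [map_one, one_mul, wordProd_append, wordProd_append, wordProd_append,
            wordProd_singleton]
          simp [wordProd_singleton, map_mul, mul_assoc, of_apply_eq_base]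

theorem len_mul_le (hφ : ∀ i, Function.Injective (φ i)) (g h : Monoid.PushoutI φ) :
    len φ (g * h) ≤ len φ g + len φ h := by
  obtain ⟨u, hu⟩ := exists_repL hφ g
  obtain ⟨v, hv⟩ := exists_repL hφ h
  obtain ⟨hau, cu, hcu⟩ := hu
  obtain ⟨hav, cv, hcv⟩ := hv
  obtain ⟨c', w, hw, hlen, hprod⟩ := exists_alt_reduction u hau cv v hav
  have : RepresentsL φ (g * h) w := by
    refine ⟨hw, cu * c', ?_⟩
    calc g * h = Monoid.PushoutI.base φ cu
          * (wordProd φ u * Monoid.PushoutI.base φ cv * wordProd φ v) := by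
          rw [hcu, hcv]; simp [mul_assoc]
      _ = Monoid.PushoutI.base φ cu * (Monoid.PushoutI.base φ c' * wordProd φ w) := by
          rw [hprod]
      _ = Monoid.PushoutI.base φ (cu * c') * wordProd φ w := by rw [map_mul, mul_assoc]
  rw [repL_len hφ this, repL_len hφ ⟨hau, cu, hcu⟩, repL_len hφ ⟨hav, cv, hcv⟩]
  exact hlen

end Aux4

/-- If `K(α,β) = l(β)` and `γ` is a right factor of `αβ`, then `γ = α₂ β` for some
right factor `α₂` of `α`. -/
theorem rightFactor_of_full_cancellation {ι : Type*} {G : ι → Type*} [∀ i, Group (G i)]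
    {H : Type*} [Group H] (φ : ∀ i, H →* G i) (hφ : ∀ i, Function.Injective (φ i))
    (α β γ : Monoid.PushoutI φ) (hK : cancelNum φ α β = len φ β)
    (hγ : IsRightFactor φ γ (α * β)) :
    ∃ α₂, IsRightFactor φ α₂ α ∧ γ = α₂ * β := by
  classical
  obtain ⟨g₁, hprod, hlen⟩ := hγ
  have hlenR : ∀ w, RepresentsR φ β w → w.length = len φ β := by
    intro w hw
    obtain ⟨w', hl, hw'⟩ := repR_toL hw
    rw [← hl, ← repL_len hφ hw']
  have hbdd : BddAbove {k | ∃ wg wh, RepresentsL φ α wg ∧ RepresentsR φ β wh ∧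
      k ≤ wg.length ∧ k ≤ wh.length ∧
      inBase φ (wordProd φ (wg.drop (wg.length - k) ++ wh.take k))} := by
    refine ⟨len φ β, ?_⟩
    rintro k ⟨wg, wh, _, hh, _, hk, _⟩
    rw [← hlenR wh hh]; exact hk
  have hne : Set.Nonempty {k | ∃ wg wh, RepresentsL φ α wg ∧ RepresentsR φ β wh ∧
      k ≤ wg.length ∧ k ≤ wh.length ∧
      inBase φ (wordProd φ (wg.drop (wg.length - k) ++ wh.take k))} := by
    obtain ⟨wg, hg⟩ := exists_repL hφ α
    obtain ⟨wh0, hw0⟩ := exists_repL hφ β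
    obtain ⟨wh, _, hh⟩ := repL_toR hw0
    refine ⟨0, wg, wh, hg, hh, Nat.zero_le _, Nat.zero_le _, ?_⟩
    simpa [inBase, Nat.sub_zero, List.drop_length, wordProd_nil]
      using (one_mem (Monoid.PushoutI.base φ).range)
  have hmem : len φ β ∈ {k | ∃ wg wh, RepresentsL φ α wg ∧ RepresentsR φ β wh ∧
      k ≤ wg.length ∧ k ≤ wh.length ∧
      inBase φ (wordProd φ (wg.drop (wg.length - k) ++ wh.take k))} := by
    rw [← hK]
    exact Nat.sSup_mem hne hbdd
  obtain ⟨wg, wh, hgα, hhβ, hng, hnh, hbase⟩ := hmem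
  have hwh : wh.length = len φ β := hlenR wh hhβ
  have hm : wg.length = len φ α := (repL_len hφ hgα).symm
  have htake : wh.take (len φ β) = wh := by
    rw [← hwh]; exact List.take_length
  rw [htake] at hbase
  obtain ⟨e, he⟩ := hbase
  obtain ⟨hgalt, c, hc⟩ := hgα
  obtain ⟨hhalt, d, hd⟩ := hhβ
  have hsplit : wg.take (wg.length - len φ β) ++ wg.drop (wg.length - len φ β) = wg :=
    List.take_append_drop _ _
  have hu1alt : IsAltWord φ (wg.take (wg.length - len φ β)) := by
    rw [← hsplit] at hgalt
    exact (isAltWord_append.1 hgalt).1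
  have hu1len : (wg.take (wg.length - len φ β)).length = len φ α - len φ β := by
    rw [List.length_take]; omega
  have h2 : wordProd φ (wg.drop (wg.length - len φ β)) * wordProd φ wh
      = Monoid.PushoutI.base φ e := by
    rw [← wordProd_append]; exact he.symm
  have hαβ : α * β = (Monoid.PushoutI.base φ c * wordProd φ (wg.take (wg.length - len φ β)))
      * Monoid.PushoutI.base φ (e * d) := by
    calc α * β = Monoid.PushoutI.base φ c * wordProd φ (wg.take (wg.length - len φ β))
          * (wordProd φ (wg.drop (wg.length - len φ β)) * wordProd φ wh)
          * Monoid.PushoutI.base φ d := by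
          conv_lhs => rw [hc, hd, ← hsplit, wordProd_append]
          simp [mul_assoc]
      _ = Monoid.PushoutI.base φ c * wordProd φ (wg.take (wg.length - len φ β))
          * Monoid.PushoutI.base φ e * Monoid.PushoutI.base φ d := by rw [h2]
      _ = _ := by rw [map_mul]; simp [mul_assoc]
  obtain ⟨w1, hw1len, hw1⟩ :=
    repL_mul_base (e * d) (⟨hu1alt, c, rfl⟩ :
      RepresentsL φ (Monoid.PushoutI.base φ c
        * wordProd φ (wg.take (wg.length - len φ β))) _)
  rw [← hαβ] at hw1
  have hlenαβ : len φ (α * β) = len φ α - len φ β := by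
    rw [repL_len hφ hw1, hw1len, hu1len]
  obtain ⟨wb, hwblen, hwb⟩ := repR_inv ⟨hhalt, d, hd⟩
  have hβinv : len φ β⁻¹ = len φ β := by
    rw [repL_len hφ hwb, hwblen, hwh]
  have hnm : len φ β ≤ len φ α := by rw [← hm]; exact hng
  have hα₂ : α = g₁ * (γ * β⁻¹) := by
    rw [← mul_assoc, ← hprod, mul_inv_cancel_right]
  have h1 : len φ (γ * β⁻¹) ≤ len φ γ + len φ β := by
    have := len_mul_le hφ γ β⁻¹
    rwa [hβinv] at this
  have h2' : len φ α ≤ len φ g₁ + len φ (γ * β⁻¹) := by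
    calc len φ α = len φ (g₁ * (γ * β⁻¹)) := by rw [← hα₂]
      _ ≤ len φ g₁ + len φ (γ * β⁻¹) := len_mul_le hφ _ _
  have hab : len φ α - len φ β = len φ g₁ + len φ γ := by rw [← hlenαβ, hlen]
  have h3 : len φ (γ * β⁻¹) = len φ γ + len φ β := by omega
  refine ⟨γ * β⁻¹, ⟨g₁, hα₂, by omega⟩, by rw [inv_mul_cancel_right]⟩
end

section
/- Let C be a multi-malnormal subgroup of a group A and let C' be a normal subsemigroup of C with 1 ∉ C'. Then NSS_A(C') ∩ C = C'. -/
/-- `S` is a normal subsemigroup of the subgroup `C`: a subset of `C` closed under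
products and under conjugation by elements of `C`. -/
def IsNormalSubsemigroupIn {A : Type*} [Group A] (C : Subgroup A) (S : Set A) : Prop :=
  S ⊆ C ∧ (∀ x ∈ S, ∀ y ∈ S, x * y ∈ S) ∧ ∀ x ∈ S, ∀ c ∈ C, c⁻¹ * x * c ∈ S

/-- `C` is multi-malnormal in `A`: for every normal subsemigroup `S` of `C` with
`1 ∉ S`, every nonempty product of conjugates of elements of `S` by elements of
`A \ C` lies in `A \ C`. -/
def MultiMalnormal {A : Type*} [Group A] (C : Subgroup A) : Prop :=
  ∀ S : Set A, IsNormalSubsemigroupIn C S → (1 : A) ∉ S →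
    ∀ l : List (A × A), l ≠ [] → (∀ p ∈ l, p.1 ∈ S ∧ p.2 ∉ C) →
      (l.map fun p => p.2⁻¹ * p.1 * p.2).prod ∉ C

/-- `nss A S`: the normal subsemigroup of `A` generated by `S`. -/
def nss (A : Type*) [Group A] (S : Set A) : Set A :=
  {x | ∃ l : List (A × A), l ≠ [] ∧ (∀ p ∈ l, p.1 ∈ S) ∧
    (l.map fun p => p.2⁻¹ * p.1 * p.2).prod = x}

/-- Key decomposition lemma: any product of conjugates of elements of `S` is either
empty, an element of `S`, or a nonempty product of conjugates by non-`C` elements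
times an element of `C`. -/
theorem nss_key {A : Type*} [Group A] (C : Subgroup A)
    (hmm : MultiMalnormal C) (S : Set A) (hS : IsNormalSubsemigroupIn C S)
    (h1 : (1 : A) ∉ S) :
    ∀ l : List (A × A), (∀ p ∈ l, p.1 ∈ S) →
      l = [] ∨ (l.map fun p => p.2⁻¹ * p.1 * p.2).prod ∈ S ∨
      ∃ l' : List (A × A), l' ≠ [] ∧ (∀ p ∈ l', p.1 ∈ S ∧ p.2 ∉ C) ∧
        ∃ c ∈ C, (l.map fun p => p.2⁻¹ * p.1 * p.2).prod =
          (l'.map fun p => p.2⁻¹ * p.1 * p.2).prod * c := by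
  intro l
  induction l with
  | nil => intro _; exact Or.inl rfl
  | cons p t ih =>
    intro hmem
    have hps : p.1 ∈ S := hmem p List.mem_cons_self
    have htmem : ∀ q ∈ t, q.1 ∈ S := fun q hq => hmem q (List.mem_cons_of_mem p hq)
    rcases ih htmem with ht0 | htS | ⟨l', hl'ne, hl'mem, c, hc, hprod⟩
    · -- t = []
      subst ht0
      by_cases hpC : p.2 ∈ C
      · refine Or.inr (Or.inl ?_)
        simp only [List.map_cons, List.map_nil, List.prod_cons, List.prod_nil, mul_one]
        exact hS.2.2 p.1 hps p.2 hpC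
      · refine Or.inr (Or.inr ⟨[p], by simp, ?_, 1, one_mem C, by simp⟩)
        intro q hq; rcases List.mem_singleton.mp hq with rfl; exact ⟨hps, hpC⟩
    · -- t-product in S
      by_cases hpC : p.2 ∈ C
      · refine Or.inr (Or.inl ?_)
        simp only [List.map_cons, List.prod_cons]
        exact hS.2.1 _ (hS.2.2 p.1 hps p.2 hpC) _ htS
      · refine Or.inr (Or.inr ⟨[p], by simp, ?_, _,
          hS.1 htS, by simp [List.prod_cons]⟩)
        intro q hq; rcases List.mem_singleton.mp hq with rfl; exact ⟨hps, hpC⟩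
    · -- t-product = Q * c with Q a product over l'
      have hQnC : (l'.map fun p => p.2⁻¹ * p.1 * p.2).prod ∉ C :=
        hmm S hS h1 l' hl'ne hl'mem
      by_cases hpC : p.2 ∈ C
      · -- absorb the conjugate into S, then push it past Q
        have hx : p.2⁻¹ * p.1 * p.2 ∈ S := hS.2.2 p.1 hps p.2 hpC
        refine Or.inr (Or.inr ⟨l' ++ [(p.2⁻¹ * p.1 * p.2,
          (l'.map fun p => p.2⁻¹ * p.1 * p.2).prod)], by simp, ?_, c, hc, ?_⟩)
        · intro q hq
          rcases List.mem_append.mp hq with hq | hq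
          · exact hl'mem q hq
          · rcases List.mem_singleton.mp hq with rfl; exact ⟨hx, hQnC⟩
        · rw [List.map_cons, List.prod_cons, hprod, List.map_append, List.prod_append,
            List.map_cons, List.map_nil, List.prod_cons, List.prod_nil, mul_one]
          generalize (l'.map fun p => p.2⁻¹ * p.1 * p.2).prod = Q
          group
      · refine Or.inr (Or.inr ⟨p :: l', by simp, ?_, c, hc, ?_⟩)
        · intro q hq
          rcases List.mem_cons.mp hq with rfl | hq
          · exact ⟨hps, hpC⟩
          · exact hl'mem q hq
        · rw [List.map_cons (l := l'), List.prod_cons, List.map_cons, List.prod_cons, hprod]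
          group

/-- If `C` is multi-malnormal in `A` and `S` is a normal subsemigroup of `C` with
`1 ∉ S`, then `NSS_A(S) ∩ C = S`. -/
theorem nss_inter_eq_of_multiMalnormal {A : Type*} [Group A] (C : Subgroup A)
    (hmm : MultiMalnormal C) (S : Set A) (hS : IsNormalSubsemigroupIn C S)
    (h1 : (1 : A) ∉ S) : nss A S ∩ (C : Set A) = S := by
  ext x
  constructor
  · rintro ⟨⟨l, hlne, hlmem, hlprod⟩, hxC⟩
    rcases nss_key C hmm S hS h1 l hlmem with rfl | hxS | ⟨l', hl'ne, hl'mem, c, hc, hprod⟩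
    · exact absurd rfl hlne
    · rwa [hlprod] at hxS
    · exfalso
      have hQnC : (l'.map fun p => p.2⁻¹ * p.1 * p.2).prod ∉ C :=
        hmm S hS h1 l' hl'ne hl'mem
      apply hQnC
      have : (l'.map fun p => p.2⁻¹ * p.1 * p.2).prod = x * c⁻¹ := by
        rw [← hlprod, hprod]; group
      rw [this]
      exact mul_mem hxC (inv_mem hc)
  · intro hxS
    refine ⟨⟨[(x, 1)], by simp, ?_, by simp⟩, hS.1 hxS⟩
    intro q hq; rcases List.mem_singleton.mp hq with rfl; exact hxS
end

section
/- Let C be a multi-malnormal subgroup of a group A and C' a normal subsemigroup of C with 1 ∉ C'. If c_1,...,c_n ∈ C', a_1,...,a_n ∈ A, and at least one a_j ∈ A \ C, then c_1^{a_1} ⋯ c_n^{a_n} ∈ A \ C. -/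
/-- If `C` is multi-malnormal in `A`, `S` a normal subsemigroup of `C` with `1 ∉ S`,
and `c₁^{a₁} ⋯ cₙ^{aₙ}` a product of conjugates with all `cᵢ ∈ S` and some
`aⱼ ∈ A \ C`, then the product lies in `A \ C`. -/
theorem multiMalnormal_mixed_conjugators {A : Type*} [Group A] (C : Subgroup A)
    (hmm : MultiMalnormal C) (S : Set A) (hS : IsNormalSubsemigroupIn C S)
    (h1 : (1 : A) ∉ S) (l : List (A × A)) (hl : ∀ p ∈ l, p.1 ∈ S)
    (hj : ∃ p ∈ l, p.2 ∉ C) :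
    (l.map fun p => p.2⁻¹ * p.1 * p.2).prod ∉ C := by
  obtain ⟨hSC, hmul, hconj⟩ := hS
  suffices h : ∀ l : List (A × A), (∀ p ∈ l, p.1 ∈ S) →
      ∃ l' : List (A × A), ∃ t : A, (∀ p ∈ l', p.1 ∈ S ∧ p.2 ∉ C) ∧ t ∈ C ∧
        (l.map fun p => p.2⁻¹ * p.1 * p.2).prod
          = (l'.map fun p => p.2⁻¹ * p.1 * p.2).prod * t ∧
        ((∃ p ∈ l, p.2 ∉ C) → l' ≠ []) by
    obtain ⟨l', t, hmem, htC, heq, hne⟩ := h l hl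
    rw [heq]
    intro hC
    have hP : (l'.map fun p => p.2⁻¹ * p.1 * p.2).prod ∉ C :=
      hmm S ⟨hSC, hmul, hconj⟩ h1 l' (hne hj) hmem
    have : (l'.map fun p => p.2⁻¹ * p.1 * p.2).prod ∈ C := by
      have := mul_mem hC (inv_mem htC)
      simpa using this
    exact hP this
  intro l
  induction l using List.reverseRecOn with
  | nil => exact fun _ => ⟨[], 1, by simp, one_mem _, by simp, by simp⟩
  | append_singleton l p ih =>
    intro hmem
    obtain ⟨l', t, hmem', htC, heq, hne⟩ := ih (fun q hq => hmem q (by simp [hq]))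
    have hpS : p.1 ∈ S := hmem p (by simp)
    by_cases hp : p.2 ∈ C
    · refine ⟨l', t * (p.2⁻¹ * p.1 * p.2), hmem',
        mul_mem htC (hSC (hconj p.1 hpS p.2 hp)), ?_, ?_⟩
      · simp only [List.map_append, List.prod_append, heq, List.map_cons, List.map_nil,
          List.prod_cons, List.prod_nil]
        group
      · rintro ⟨q, hq, hqC⟩
        rcases List.mem_append.mp hq with hq | hq
        · exact hne ⟨q, hq, hqC⟩
        · simp only [List.mem_singleton] at hq
          exact absurd (hq ▸ hp) hqC
    · refine ⟨l' ++ [(p.1, p.2 * t⁻¹)], t, ?_, htC, ?_, fun _ => by simp⟩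
      · intro q hq
        rcases List.mem_append.mp hq with hq | hq
        · exact hmem' q hq
        · simp only [List.mem_singleton] at hq
          subst hq
          refine ⟨hpS, fun hqt => hp ?_⟩
          have : (p.2 * t⁻¹) * t ∈ C := mul_mem hqt htC
          simpa using this
      · simp only [List.map_append, List.prod_append, heq, List.map_cons, List.map_nil,
          List.prod_cons, List.prod_nil]
        group
end
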